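/- arXiv:1306.5829 — 4 statements merged into one kernel-verified Lean document; each statement's English description precedes it below -/
import Mathlib

section
/- Let P be a Markov transition kernel on a measurable state space K that is lazy (P(x, {x}) ≥ 1/2 for all x) and reversible with respect to a stationary probability distribution Q. Let φ = inf{ ∫_S P(x, K∖S) dQ(x) / min(Q(S), Q(K∖S)) : S measurable, 0 < Q(S) < 1 } be the conductance. Let Q₀ be a starting distribution with M(Q₀, Q) = sup_S Q₀(S)/Q(S) finite, and let Q_t be the distribution after t steps of the chain started from Q₀. Then for every t ≥ 0, d_tv(Q_t, Q) ≤ M(Q₀, Q) · (1 − φ²/2)^t. -/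
/-!
Write `w q = min (√q) (√(1 - q))` and `c = 1 - φ² / 2`. By induction on `t`, every measurable
`T` satisfies `Q_t(T) ≤ Q(T) + M cᵗ w(Q(T))`; applied to `S` and `Sᶜ` (note `w (1 - q) = w q`)
this gives `|Q_t(S) - Q(S)| ≤ M cᵗ w(Q(S)) ≤ M cᵗ`. At `t = 0` it is warmness.

For the inductive step, laziness splits `2 P(x, T)` into two `[0, 1]`-valued functions,
`max (2 P(x, T) - 1) 0` (supported on `T`) and `min (2 P(x, T)) 1`, whose `Q`-integrals are
`Q(T) ∓ 2 Φ(T)`, where `Φ(T) = ∫_T P(x, Tᶜ) dQ` is the ergodic flow (the second by stationarity).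
The layer-cake formula and Jensen's inequality for the concave `w` carry the bound from sets to
`[0, 1]`-valued functions, so `2 Q_{t+1}(T) ≤ 2 Q(T) + M cᵗ (w(q - 2Φ) + w(q + 2Φ))` with
`q = Q(T)`. Since `φ min(q, 1 - q) ≤ Φ ≤ min(q, 1 - q) / 2`, the inequality
`√(1 - x) + √(1 + x) ≤ 2 - x² / 4` bounds the bracket by `2 c w(q)`.
-/

open MeasureTheory Real Set ENNReal

noncomputable def sqrtMin (q : ℝ) : ℝ := min (√q) (√(1 - q))

lemma sqrtMin_le_one (q : ℝ) : sqrtMin q ≤ 1 := by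
  rcases le_total q 1 with hq | hq
  · exact (min_le_left _ _).trans (sqrt_le_one.mpr hq)
  · exact (min_le_right _ _).trans (sqrt_le_one.mpr (by linarith))

lemma sqrtMin_one_sub (q : ℝ) : sqrtMin (1 - q) = sqrtMin q := by
  rw [sqrtMin, sqrtMin, _root_.sub_sub_cancel, min_comm]

lemma sqrtMin_of_le_half {q : ℝ} (hq : q ≤ 1 / 2) : sqrtMin q = √q :=
  min_eq_left (sqrt_le_sqrt (by linarith))

lemma continuous_sqrtMin : Continuous sqrtMin := by
  unfold sqrtMin
  fun_prop

lemma concaveOn_sqrtMin : ConcaveOn ℝ (Icc 0 1) sqrtMin := by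
  have h₁ : ConcaveOn ℝ (Icc 0 1) (fun q : ℝ => √q) :=
    strictConcaveOn_sqrt.concaveOn.subset Icc_subset_Ici_self (convex_Icc 0 1)
  have h₂ : ConcaveOn ℝ (Icc 0 1) (fun q : ℝ => √(1 - q)) := by
    refine (strictConcaveOn_sqrt.concaveOn.comp_affineMap
      (AffineMap.const ℝ ℝ (1 : ℝ) - AffineMap.id ℝ ℝ)).subset (fun q hq => ?_) (convex_Icc 0 1)
    simp [hq.2]
  exact h₁.inf h₂

lemma sqrt_one_sub_add_sqrt_one_add_le {x : ℝ} (hx₀ : 0 ≤ x) (hx₁ : x ≤ 1) :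
    √(1 - x) + √(1 + x) ≤ 2 - x ^ 2 / 4 := by
  have ha : √(1 - x) ^ 2 = 1 - x := sq_sqrt (by linarith)
  have hb : √(1 + x) ^ 2 = 1 + x := sq_sqrt (by linarith)
  nlinarith [sq_nonneg (√(1 - x) * √(1 + x) - 1), sq_nonneg (√(1 - x) + √(1 + x) - 2),
    sq_nonneg (√(1 - x) - √(1 + x)), mul_nonneg (sqrt_nonneg (1 - x)) (sqrt_nonneg (1 + x))]

lemma sqrtMin_sub_add_sqrtMin_add_le {q s φ : ℝ} (hq₀ : 0 ≤ q) (hq₁ : q ≤ 1) (hφ : 0 ≤ φ)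
    (hφs : 2 * φ * min q (1 - q) ≤ s) (hs : s ≤ min q (1 - q)) :
    sqrtMin (q - s) + sqrtMin (q + s) ≤ (2 - φ ^ 2) * sqrtMin q := by
  wlog hq : q ≤ 1 / 2 generalizing q
  · have hmin : min (1 - q) (1 - (1 - q)) = min q (1 - q) := by
      rw [_root_.sub_sub_cancel, min_comm]
    have h := this (q := 1 - q) (by linarith) (by linarith) (hmin ▸ hφs) (hmin ▸ hs) (by linarith)
    rwa [show 1 - q - s = 1 - (q + s) by ring, show 1 - q + s = 1 - (q - s) by ring,
      sqrtMin_one_sub, sqrtMin_one_sub, sqrtMin_one_sub, add_comm] at h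
  rw [min_eq_left (by linarith)] at hφs hs
  rw [sqrtMin_of_le_half hq]
  rcases hq₀.eq_or_lt with rfl | hq₀
  · obtain rfl : s = 0 := by linarith
    simp [sqrtMin]
  set x := s / q
  have hsx : s = q * x := (mul_div_cancel₀ s hq₀.ne').symm
  have hx₀ : 2 * φ ≤ x := by rw [le_div_iff₀ hq₀]; linarith
  have hx₁ : x ≤ 1 := by rw [div_le_one hq₀]; exact hs
  calc sqrtMin (q - s) + sqrtMin (q + s) ≤ √(q - s) + √(q + s) :=
        add_le_add (min_le_left _ _) (min_le_left _ _)
    _ = √q * (√(1 - x) + √(1 + x)) := by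
        rw [hsx, mul_add, ← sqrt_mul hq₀.le, ← sqrt_mul hq₀.le]; ring_nf
    _ ≤ √q * (2 - x ^ 2 / 4) := by
        gcongr; exact sqrt_one_sub_add_sqrt_one_add_le (by linarith) hx₁
    _ ≤ √q * (2 - φ ^ 2) := by gcongr; nlinarith
    _ = (2 - φ ^ 2) * √q := mul_comm _ _

lemma le_add_mul_sqrtMin_of_le_mul {a q M : ℝ} (ha : a ≤ 1) (hq₀ : 0 ≤ q) (hq₁ : q ≤ 1)
    (hM : 1 ≤ M) (haq : a ≤ M * q) : a ≤ q + M * sqrtMin q := by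
  rcases le_total q (1 / 2) with hq | hq
  · rw [sqrtMin_of_le_half hq]
    have : q ≤ √q := le_sqrt_self_iff.mpr hq₁
    nlinarith [sqrt_nonneg q]
  · rw [← sqrtMin_one_sub, sqrtMin_of_le_half (by linarith)]
    have : 1 - q ≤ √(1 - q) := le_sqrt_self_iff.mpr (by linarith)
    nlinarith

section LevelSets

variable {β : Type*} [MeasurableSpace β]

lemma integrable_of_mem_Icc {μ : Measure β} [IsFiniteMeasure μ] {f : β → ℝ} (hf : Measurable f)
    (hf₀₁ : ∀ x, f x ∈ Icc 0 1) : Integrable f μ :=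
  Integrable.of_bound hf.aestronglyMeasurable 1
    (ae_of_all _ fun x => by rw [norm_of_nonneg (hf₀₁ x).1]; exact (hf₀₁ x).2)

lemma measurable_measureReal_setOf_le (m : Measure β) [IsFiniteMeasure m] (f : β → ℝ) :
    Measurable fun t => m.real {x | t ≤ f x} :=
  Antitone.measurable fun _ _ hst =>
    measureReal_mono (fun _ hx => hst.trans hx) (measure_ne_top _ _)

lemma integral_le_integral_add_mul_of_measureReal_le {ν Q : Measure β} [IsFiniteMeasure ν]
    [IsProbabilityMeasure Q] {g : ℝ → ℝ} (hg : ConcaveOn ℝ (Icc 0 1) g) (hgc : Continuous g)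
    {K : ℝ} (hK : 0 ≤ K) (hνQ : ∀ S, MeasurableSet S → ν.real S ≤ Q.real S + K * g (Q.real S))
    {f : β → ℝ} (hf : Measurable f) (hf₀₁ : ∀ x, f x ∈ Icc 0 1) :
    ∫ x, f x ∂ν ≤ ∫ x, f x ∂Q + K * g (∫ x, f x ∂Q) := by
  let μ : Measure ℝ := volume.restrict (Ioc 0 1)
  have : IsProbabilityMeasure μ := ⟨by simp [μ]⟩
  have hlayer : ∀ (m : Measure β) [IsFiniteMeasure m],
      ∫ x, f x ∂m = ∫ t, m.real {x | t ≤ f x} ∂μ := fun m _ =>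
    (integrable_of_mem_Icc hf hf₀₁).integral_eq_integral_Ioc_meas_le
      (ae_of_all _ fun x => (hf₀₁ x).1) (ae_of_all _ fun x => (hf₀₁ x).2)
  let u : ℝ → ℝ := fun t => Q.real {x | t ≤ f x}
  have hu : Measurable u := measurable_measureReal_setOf_le Q f
  have hu₀₁ : ∀ t, u t ∈ Icc 0 1 := fun t => ⟨measureReal_nonneg, measureReal_le_one⟩
  obtain ⟨C, hC⟩ := (isCompact_Icc (a := (0 : ℝ)) (b := 1)).exists_bound_of_continuousOn
    hgc.continuousOn
  have hu_int : Integrable u μ := integrable_of_mem_Icc hu hu₀₁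
  have hgu_int : Integrable (g ∘ u) μ := Integrable.of_bound
    (hgc.measurable.comp hu).aestronglyMeasurable C (ae_of_all _ fun t => hC _ (hu₀₁ t))
  have hν_int : Integrable (fun t => ν.real {x | t ≤ f x}) μ :=
    Integrable.of_bound (measurable_measureReal_setOf_le ν f).aestronglyMeasurable (ν.real univ)
      (ae_of_all _ fun t => by
        rw [norm_of_nonneg measureReal_nonneg]
        exact measureReal_mono (subset_univ _) (measure_ne_top _ _))
  have hjensen : ∫ t, g (u t) ∂μ ≤ g (∫ t, u t ∂μ) :=
    hg.le_map_integral hgc.continuousOn isClosed_Icc (ae_of_all _ hu₀₁) hu_int hgu_int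
  rw [hlayer ν, hlayer Q]
  calc ∫ t, ν.real {x | t ≤ f x} ∂μ ≤ ∫ t, (u t + K * g (u t)) ∂μ :=
        integral_mono hν_int (hu_int.add (hgu_int.const_mul K))
          fun t => hνQ _ (measurableSet_le measurable_const hf)
    _ = ∫ t, u t ∂μ + K * ∫ t, g (u t) ∂μ := by
        rw [← integral_const_mul]; exact integral_add hu_int (hgu_int.const_mul K)
    _ ≤ ∫ t, u t ∂μ + K * g (∫ t, u t ∂μ) := by gcongr

lemma abs_measureReal_sub_le_mul_sqrtMin {ν Q : Measure β} [IsProbabilityMeasure ν]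
    [IsProbabilityMeasure Q] {K : ℝ}
    (hνQ : ∀ S, MeasurableSet S → ν.real S ≤ Q.real S + K * sqrtMin (Q.real S))
    {S : Set β} (hS : MeasurableSet S) : |ν.real S - Q.real S| ≤ K * sqrtMin (Q.real S) := by
  have hcompl := hνQ Sᶜ hS.compl
  rw [probReal_compl_eq_one_sub hS, probReal_compl_eq_one_sub hS, sqrtMin_one_sub] at hcompl
  rw [abs_le]
  constructor <;> linarith [hνQ S hS]

end LevelSets

section MarkovKernel

variable {α : Type*} [MeasurableSpace α]

noncomputable def lazySplitLow (P : α → Measure α) (T : Set α) (x : α) : ℝ :=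
  max (2 * (P x T).toReal - 1) 0

noncomputable def lazySplitHigh (P : α → Measure α) (T : Set α) (x : α) : ℝ :=
  min (2 * (P x T).toReal) 1

noncomputable def ergodicFlow (P : α → Measure α) (Q : Measure α) (S : Set α) : ℝ :=
  ∫ x in S, (P x Sᶜ).toReal ∂Q

def conductanceRatios (P : α → Measure α) (Q : Measure α) : Set ℝ :=
  {r | ∃ S : Set α, MeasurableSet S ∧ 0 < Q S ∧ Q S < 1 ∧
    r = ergodicFlow P Q S / min (Q S).toReal (Q Sᶜ).toReal}

noncomputable def conductance (P : α → Measure α) (Q : Measure α) : ℝ :=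
  sInf (conductanceRatios P Q)

variable {P : α → Measure α} {Q : Measure α}

lemma ergodicFlow_nonneg (S : Set α) : 0 ≤ ergodicFlow P Q S :=
  integral_nonneg fun _ => toReal_nonneg

lemma conductanceRatios_nonneg : ∀ r ∈ conductanceRatios P Q, 0 ≤ r := by
  rintro _ ⟨S, -, -, -, rfl⟩
  exact div_nonneg (ergodicFlow_nonneg S) (le_min toReal_nonneg toReal_nonneg)

lemma conductance_nonneg : 0 ≤ conductance P Q :=
  Real.sInf_nonneg conductanceRatios_nonneg

lemma min_measureReal_one_sub_pos [IsProbabilityMeasure Q] {S : Set α} (h₀ : 0 < Q S)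
    (h₁ : Q S < 1) : 0 < min (Q.real S) (1 - Q.real S) := by
  rw [measureReal_def]
  have h₁' : (Q S).toReal < 1 := by
    simpa using (ENNReal.toReal_lt_toReal (measure_ne_top Q S) one_ne_top).2 h₁
  exact lt_min (ENNReal.toReal_pos h₀.ne' (measure_ne_top Q S)) (by linarith)

lemma conductance_mul_min_le_ergodicFlow [IsProbabilityMeasure Q] {T : Set α}
    (hT : MeasurableSet T) :
    conductance P Q * min (Q.real T) (1 - Q.real T) ≤ ergodicFlow P Q T := by
  by_cases h : 0 < Q T ∧ Q T < 1
  · have hmin : min (Q T).toReal (Q Tᶜ).toReal = min (Q.real T) (1 - Q.real T) := by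
      rw [← measureReal_def, ← measureReal_def, probReal_compl_eq_one_sub hT]
    rw [← le_div_iff₀ (min_measureReal_one_sub_pos h.1 h.2)]
    exact csInf_le ⟨0, conductanceRatios_nonneg⟩ ⟨T, hT, h.1, h.2, by rw [hmin]⟩
  · have hq : Q.real T = 0 ∨ Q.real T = 1 := by
      rw [not_and_or, not_lt, not_lt, nonpos_iff_eq_zero] at h
      rcases h with h | h
      · exact Or.inl (by simp [measureReal_def, h])
      · exact Or.inr (by simp [measureReal_def, le_antisymm prob_le_one h])
    rcases hq with hq | hq <;> simp [hq, ergodicFlow_nonneg]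

lemma measurable_apply (hP : Measurable P) {T : Set α} (hT : MeasurableSet T) :
    Measurable fun x => P x T :=
  (Measure.measurable_coe hT).comp hP

lemma lazySplitLow_add_lazySplitHigh (T : Set α) (x : α) :
    lazySplitLow P T x + lazySplitHigh P T x = 2 * (P x T).toReal := by
  rw [lazySplitLow, lazySplitHigh]
  rcases le_total (2 * (P x T).toReal) 1 with h | h
  · rw [max_eq_right (by linarith), min_eq_left h, zero_add]
  · rw [max_eq_left (by linarith), min_eq_right h, sub_add_cancel]

lemma measurable_lazySplitLow (hP : Measurable P) {T : Set α} (hT : MeasurableSet T) :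
    Measurable (lazySplitLow P T) :=
  (((measurable_apply hP hT).ennreal_toReal.const_mul 2).sub_const 1).max measurable_const

lemma measurable_lazySplitHigh (hP : Measurable P) {T : Set α} (hT : MeasurableSet T) :
    Measurable (lazySplitHigh P T) :=
  ((measurable_apply hP hT).ennreal_toReal.const_mul 2).min measurable_const

variable [∀ x, IsProbabilityMeasure (P x)]

lemma toReal_apply_mem_Icc (x : α) (T : Set α) : (P x T).toReal ∈ Icc 0 1 :=
  ⟨toReal_nonneg, measureReal_le_one⟩

lemma lazySplitLow_mem_Icc (T : Set α) (x : α) : lazySplitLow P T x ∈ Icc 0 1 :=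
  ⟨le_max_right _ _, max_le (by linarith [(toReal_apply_mem_Icc (P := P) x T).2]) zero_le_one⟩

lemma lazySplitHigh_mem_Icc (T : Set α) (x : α) : lazySplitHigh P T x ∈ Icc 0 1 :=
  ⟨le_min (by linarith [(toReal_apply_mem_Icc (P := P) x T).1]) zero_le_one, min_le_right _ _⟩

lemma integrable_toReal_apply (hP : Measurable P) {T : Set α} (hT : MeasurableSet T)
    (μ : Measure α) [IsFiniteMeasure μ] : Integrable (fun x => (P x T).toReal) μ :=
  integrable_of_mem_Icc (measurable_apply hP hT).ennreal_toReal fun x => toReal_apply_mem_Icc x T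

lemma measureReal_bind_eq_integral (hP : Measurable P) (ν : Measure α) {T : Set α}
    (hT : MeasurableSet T) : (ν.bind P).real T = ∫ x, (P x T).toReal ∂ν := by
  rw [integral_toReal (measurable_apply hP hT).aemeasurable
    (ae_of_all _ fun x => measure_lt_top _ _), measureReal_def,
    Measure.bind_apply hT hP.aemeasurable]

lemma integral_toReal_apply_of_bind_eq (hP : Measurable P)
    (hstat : ∀ B, MeasurableSet B → Q.bind P B = Q B) {T : Set α} (hT : MeasurableSet T) :
    ∫ x, (P x T).toReal ∂Q = Q.real T := by
  rw [← measureReal_bind_eq_integral hP Q hT, measureReal_def, hstat T hT, measureReal_def]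

lemma isProbabilityMeasure_of_bind_succ (hP : Measurable P) {Qt : ℕ → Measure α}
    [IsProbabilityMeasure (Qt 0)] (hQt : ∀ n, Qt (n + 1) = (Qt n).bind P) (n : ℕ) :
    IsProbabilityMeasure (Qt n) := by
  induction n with
  | zero => infer_instance
  | succ n _ =>
    rw [hQt]
    exact isProbabilityMeasure_bind hP.aemeasurable (ae_of_all _ inferInstance)

section Lazy

variable (hlazy : ∀ x, (1 : ℝ≥0∞) / 2 ≤ P x {x})
include hlazy

lemma half_le_toReal_apply_of_mem {T : Set α} {x : α} (hx : x ∈ T) :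
    1 / 2 ≤ (P x T).toReal := by
  simpa using ENNReal.toReal_mono (measure_ne_top _ _)
    ((hlazy x).trans (measure_mono (singleton_subset_iff.2 hx)))

lemma toReal_apply_le_half_of_notMem {T : Set α} (hT : MeasurableSet T) {x : α} (hx : x ∉ T) :
    (P x T).toReal ≤ 1 / 2 := by
  have hunion := measureReal_union (μ := P x) (disjoint_singleton_left.2 hx) hT
  have hle : (P x).real ({x} ∪ T) ≤ 1 := measureReal_le_one
  have := half_le_toReal_apply_of_mem hlazy (mem_singleton x)
  simp only [measureReal_def] at hunion hle
  linarith

lemma lazySplitLow_eq_indicator {T : Set α} (hT : MeasurableSet T) :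
    lazySplitLow P T = T.indicator fun x => 1 - 2 * (P x Tᶜ).toReal := by
  funext x
  by_cases hx : x ∈ T
  · have := half_le_toReal_apply_of_mem hlazy hx
    have hcompl : (P x Tᶜ).toReal = 1 - (P x T).toReal := probReal_compl_eq_one_sub hT
    rw [indicator_of_mem hx, hcompl, lazySplitLow, max_eq_left (by linarith)]
    ring
  · have := toReal_apply_le_half_of_notMem hlazy hT hx
    rw [indicator_of_notMem hx, lazySplitLow, max_eq_right (by linarith)]

lemma integral_lazySplitLow (hP : Measurable P) [IsFiniteMeasure Q] {T : Set α}
    (hT : MeasurableSet T) : ∫ x, lazySplitLow P T x ∂Q = Q.real T - 2 * ergodicFlow P Q T := by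
  rw [lazySplitLow_eq_indicator hlazy hT, integral_indicator hT,
    integral_sub (integrable_const 1) ((integrable_toReal_apply hP hT.compl _).const_mul 2),
    integral_const_mul, setIntegral_const, smul_eq_mul, mul_one, ergodicFlow]

lemma integral_lazySplitHigh (hP : Measurable P)
    (hstat : ∀ B, MeasurableSet B → Q.bind P B = Q B) [IsFiniteMeasure Q] {T : Set α}
    (hT : MeasurableSet T) : ∫ x, lazySplitHigh P T x ∂Q = Q.real T + 2 * ergodicFlow P Q T := by
  have hsplit := integral_add
    (integrable_of_mem_Icc (μ := Q) (measurable_lazySplitLow hP hT) (lazySplitLow_mem_Icc T))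
    (integrable_of_mem_Icc (μ := Q) (measurable_lazySplitHigh hP hT) (lazySplitHigh_mem_Icc T))
  simp only [lazySplitLow_add_lazySplitHigh, integral_const_mul,
    integral_toReal_apply_of_bind_eq hP hstat hT, integral_lazySplitLow hlazy hP hT] at hsplit
  linarith

lemma two_mul_ergodicFlow_le_min (hP : Measurable P)
    (hstat : ∀ B, MeasurableSet B → Q.bind P B = Q B) [IsProbabilityMeasure Q] {T : Set α}
    (hT : MeasurableSet T) : 2 * ergodicFlow P Q T ≤ min (Q.real T) (1 - Q.real T) := by
  have hlow : 0 ≤ ∫ x, lazySplitLow P T x ∂Q :=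
    integral_nonneg fun x => (lazySplitLow_mem_Icc T x).1
  have hhigh : ∫ x, lazySplitHigh P T x ∂Q ≤ 1 := by
    simpa using integral_mono
      (integrable_of_mem_Icc (μ := Q) (measurable_lazySplitHigh hP hT) (lazySplitHigh_mem_Icc T))
      (integrable_const 1) fun x => (lazySplitHigh_mem_Icc T x).2
  rw [integral_lazySplitLow hlazy hP hT] at hlow
  rw [integral_lazySplitHigh hlazy hP hstat hT] at hhigh
  exact le_min (by linarith) (by linarith)

lemma conductance_le_half (hP : Measurable P) (hstat : ∀ B, MeasurableSet B → Q.bind P B = Q B)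
    [IsProbabilityMeasure Q] : conductance P Q ≤ 1 / 2 := by
  rcases (conductanceRatios P Q).eq_empty_or_nonempty with h | ⟨_, S, hS, h₀, h₁, -⟩
  · rw [conductance, h, Real.sInf_empty]
    norm_num
  · nlinarith [min_measureReal_one_sub_pos h₀ h₁,
      conductance_mul_min_le_ergodicFlow (P := P) (Q := Q) hS,
      two_mul_ergodicFlow_le_min hlazy hP hstat hS]

lemma one_sub_conductance_sq_div_two_nonneg (hP : Measurable P)
    (hstat : ∀ B, MeasurableSet B → Q.bind P B = Q B) [IsProbabilityMeasure Q] :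
    0 ≤ 1 - conductance P Q ^ 2 / 2 := by
  nlinarith [conductance_nonneg (P := P) (Q := Q), conductance_le_half hlazy hP hstat]

theorem measureReal_bind_le_add_mul_sqrtMin (hP : Measurable P)
    (hstat : ∀ B, MeasurableSet B → Q.bind P B = Q B) [IsProbabilityMeasure Q]
    {ν : Measure α} [IsFiniteMeasure ν] {K : ℝ} (hK : 0 ≤ K)
    (hν : ∀ S, MeasurableSet S → ν.real S ≤ Q.real S + K * sqrtMin (Q.real S))
    {T : Set α} (hT : MeasurableSet T) :
    (ν.bind P).real T ≤ Q.real T + K * (1 - conductance P Q ^ 2 / 2) * sqrtMin (Q.real T) := by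
  have hlow := integral_le_integral_add_mul_of_measureReal_le concaveOn_sqrtMin
    continuous_sqrtMin hK hν (measurable_lazySplitLow hP hT) (lazySplitLow_mem_Icc T)
  have hhigh := integral_le_integral_add_mul_of_measureReal_le concaveOn_sqrtMin
    continuous_sqrtMin hK hν (measurable_lazySplitHigh hP hT) (lazySplitHigh_mem_Icc T)
  rw [integral_lazySplitLow (Q := Q) hlazy hP hT] at hlow
  rw [integral_lazySplitHigh hlazy hP hstat hT] at hhigh
  have hsum : ∫ x, lazySplitLow P T x ∂ν + ∫ x, lazySplitHigh P T x ∂ν =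
      2 * (ν.bind P).real T := by
    rw [← integral_add
      (integrable_of_mem_Icc (measurable_lazySplitLow hP hT) (lazySplitLow_mem_Icc T))
      (integrable_of_mem_Icc (measurable_lazySplitHigh hP hT) (lazySplitHigh_mem_Icc T))]
    simp only [lazySplitLow_add_lazySplitHigh, integral_const_mul,
      measureReal_bind_eq_integral hP ν hT]
  have hstep := sqrtMin_sub_add_sqrtMin_add_le measureReal_nonneg measureReal_le_one
    conductance_nonneg (by linarith [conductance_mul_min_le_ergodicFlow (P := P) (Q := Q) hT])
    (two_mul_ergodicFlow_le_min hlazy hP hstat hT)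
  nlinarith [mul_le_mul_of_nonneg_left hstep hK]

theorem measureReal_iterate_le_add_mul_pow_sqrtMin (hP : Measurable P)
    (hstat : ∀ B, MeasurableSet B → Q.bind P B = Q B) [IsProbabilityMeasure Q]
    {Qt : ℕ → Measure α} [IsProbabilityMeasure (Qt 0)] (hQt : ∀ n, Qt (n + 1) = (Qt n).bind P)
    {M : ℝ} (hM : ∀ S, MeasurableSet S → (Qt 0).real S ≤ M * Q.real S) (n : ℕ) {T : Set α}
    (hT : MeasurableSet T) :
    (Qt n).real T ≤ Q.real T + M * (1 - conductance P Q ^ 2 / 2) ^ n * sqrtMin (Q.real T) := by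
  have hM₁ : 1 ≤ M := by simpa using hM univ MeasurableSet.univ
  induction n generalizing T with
  | zero =>
    rw [pow_zero, mul_one]
    exact le_add_mul_sqrtMin_of_le_mul measureReal_le_one measureReal_nonneg measureReal_le_one
      hM₁ (hM T hT)
  | succ n ih =>
    have := isProbabilityMeasure_of_bind_succ hP hQt n
    have hK : 0 ≤ M * (1 - conductance P Q ^ 2 / 2) ^ n :=
      mul_nonneg (by linarith) (pow_nonneg (one_sub_conductance_sq_div_two_nonneg hlazy hP hstat) n)
    rw [hQt, pow_succ, ← mul_assoc]
    exact measureReal_bind_le_add_mul_sqrtMin hlazy hP hstat hK (fun S hS => ih hS) hT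

end Lazy

end MarkovKernel

theorem lovasz_simonovits_mixing_general
    {α : Type*} [MeasurableSpace α]
    (P : α → Measure α) (hPmeas : Measurable P)
    (hPprob : ∀ x, IsProbabilityMeasure (P x))
    (hlazy : ∀ x, (1 : ℝ≥0∞) / 2 ≤ P x {x})
    (Q : Measure α) [IsProbabilityMeasure Q]
    (hstat : ∀ B : Set α, MeasurableSet B → Q.bind P B = Q B)
    (φ : ℝ)
    (hφ : φ = sInf {r : ℝ | ∃ S : Set α, MeasurableSet S ∧ 0 < Q S ∧ Q S < 1 ∧
      r = (∫ x in S, (P x Sᶜ).toReal ∂Q) / min (Q S).toReal (Q Sᶜ).toReal})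
    (Q₀ : Measure α) [IsProbabilityMeasure Q₀]
    (M : ℝ) (hM : ∀ S : Set α, MeasurableSet S → (Q₀ S).toReal ≤ M * (Q S).toReal)
    (Qt : ℕ → Measure α)
    (hQt0 : Qt 0 = Q₀)
    (hQtsucc : ∀ t, Qt (t + 1) = (Qt t).bind P)
    (t : ℕ) (S : Set α) (hS : MeasurableSet S) :
    |(Qt t S).toReal - (Q S).toReal| ≤ M * (1 - φ ^ 2 / 2) ^ t := by
  obtain rfl : φ = conductance P Q := hφ
  subst hQt0
  have := hPprob
  have := isProbabilityMeasure_of_bind_succ hPmeas hQtsucc t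
  have hM₁ : 1 ≤ M := by simpa using hM univ MeasurableSet.univ
  have hK : 0 ≤ M * (1 - conductance P Q ^ 2 / 2) ^ t := mul_nonneg (by linarith)
    (pow_nonneg (one_sub_conductance_sq_div_two_nonneg hlazy hPmeas hstat) t)
  calc |(Qt t).real S - Q.real S|
      ≤ M * (1 - conductance P Q ^ 2 / 2) ^ t * sqrtMin (Q.real S) :=
        abs_measureReal_sub_le_mul_sqrtMin (fun T hT =>
          measureReal_iterate_le_add_mul_pow_sqrtMin hlazy hPmeas hstat hQtsucc hM t hT) hS
    _ ≤ M * (1 - conductance P Q ^ 2 / 2) ^ t := mul_le_of_le_one_right hK (sqrtMin_le_one _)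

/-- Lovász–Simonovits mixing bound: for a lazy Markov chain `P` reversible with respect
to its stationary distribution `Q`, with conductance `φ`, starting distribution `Q₀`
with `M`-warmness `M(Q₀,Q) ≤ M`, the distribution `Q_t` after `t` steps satisfies
`d_tv(Q_t, Q) ≤ M · (1 - φ²/2)^t`. -/
theorem lovasz_simonovits_mixing
    {α : Type*} [MeasurableSpace α]
    (P : α → Measure α) (hPmeas : Measurable P)
    (hPprob : ∀ x, IsProbabilityMeasure (P x))
    (hlazy : ∀ x, (1 : ℝ≥0∞) / 2 ≤ P x {x})
    (Q : Measure α) [IsProbabilityMeasure Q]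
    (hrev : ∀ A B : Set α, MeasurableSet A → MeasurableSet B →
      ∫ x in A, (P x B).toReal ∂Q = ∫ x in B, (P x A).toReal ∂Q)
    (hstat : ∀ B : Set α, MeasurableSet B → Q.bind P B = Q B)
    (φ : ℝ)
    (hφ : φ = sInf {r : ℝ | ∃ S : Set α, MeasurableSet S ∧ 0 < Q S ∧ Q S < 1 ∧
      r = (∫ x in S, (P x Sᶜ).toReal ∂Q) / min (Q S).toReal (Q Sᶜ).toReal})
    (Q₀ : Measure α) [IsProbabilityMeasure Q₀]
    (M : ℝ) (hM : ∀ S : Set α, MeasurableSet S → (Q₀ S).toReal ≤ M * (Q S).toReal)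
    (Qt : ℕ → Measure α)
    (hQt0 : Qt 0 = Q₀)
    (hQtsucc : ∀ t, Qt (t + 1) = (Qt t).bind P)
    (t : ℕ) (S : Set α) (hS : MeasurableSet S) :
    |(Qt t S).toReal - (Q S).toReal| ≤ M * (1 - φ ^ 2 / 2) ^ t :=
  lovasz_simonovits_mixing_general P hPmeas hPprob hlazy Q hstat φ hφ Q₀ M hM Qt hQt0 hQtsucc t S hS
end

section
/- Let n ≥ 2, let 0 < σ ≤ 1, and let K ⊆ ℝⁿ be a convex body containing the unit ball B_n centered at the origin. Then the probability density proportional to e^{−‖x‖²/(2σ²)} restricted to K is σ-rounded: every level set L (which is the intersection of K with a ball rB_n, r ≤ diameter, centered at the origin) contains a ball of radius σ·π(L), where π is the probability measure with density proportional to e^{−‖x‖²/(2σ²)} on K. -/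
open MeasureTheory Real Set Metric Pointwise

set_option maxHeartbeats 1000000 in
/-- σ-roundedness of the restricted Gaussian (Lemma 5.6 of the paper): for `n ≥ 2`,
`0 < σ ≤ 1`, and a convex body `K` containing the unit ball, the density proportional
to `e^{-‖x‖²/(2σ²)}` on `K` is `σ`-rounded: every nonempty level set
`L = {x ∈ K : e^{-‖x‖²/(2σ²)} ≥ t}` contains a ball of radius `σ · π(L)`, where `π` is
the probability measure with density proportional to `e^{-‖x‖²/(2σ²)}` on `K`. -/
theorem gaussian_restricted_rounded
    (n : ℕ) (hn : 2 ≤ n) (σ : ℝ) (hσ0 : 0 < σ) (hσ1 : σ ≤ 1)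
    (K : Set (EuclideanSpace ℝ (Fin n)))
    (hKconv : Convex ℝ K) (hKcomp : IsCompact K)
    (hKball : closedBall (0 : EuclideanSpace ℝ (Fin n)) 1 ⊆ K)
    (t : ℝ) (ht : 0 < t)
    (L : Set (EuclideanSpace ℝ (Fin n)))
    (hL : L = {x ∈ K | t ≤ Real.exp (-‖x‖^2 / (2 * σ^2))})
    (hLne : L.Nonempty) :
    ∃ z : EuclideanSpace ℝ (Fin n),
      closedBall z (σ * ((∫ x in L, Real.exp (-‖x‖^2 / (2 * σ^2))) /
        (∫ x in K, Real.exp (-‖x‖^2 / (2 * σ^2))))) ⊆ L := by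
  set f : EuclideanSpace ℝ (Fin n) → ℝ := fun x => Real.exp (-‖x‖^2 / (2 * σ^2)) with hfdef
  have hσ2 : (0:ℝ) < 2 * σ^2 := by positivity
  have hfpos : ∀ x, 0 < f x := fun x => Real.exp_pos _
  have hfcont : Continuous f := by
    apply Real.continuous_exp.comp
    exact ((continuous_norm.pow 2).neg).div_const _
  -- t ≤ 1
  have ht1 : t ≤ 1 := by
    obtain ⟨x0, hx0⟩ := hLne
    rw [hL] at hx0
    refine hx0.2.trans ?_
    rw [← Real.exp_zero]
    apply Real.exp_le_exp.2
    have h0 : (0:ℝ) ≤ ‖x0‖^2 := by positivity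
    apply div_nonpos_of_nonpos_of_nonneg <;> nlinarith
  have hlogt : Real.log t ≤ 0 := Real.log_nonpos ht.le ht1
  set s : ℝ := Real.sqrt (-2 * Real.log t) with hsdef
  have hs0 : 0 ≤ s := Real.sqrt_nonneg _
  have hs2 : s^2 = -2 * Real.log t := Real.sq_sqrt (by linarith)
  -- characterization of L
  have hLeq : L = K ∩ closedBall 0 (σ * s) := by
    rw [hL]
    ext x
    simp only [mem_inter_iff, mem_setOf_eq, mem_closedBall, dist_zero_right]
    constructor
    · rintro ⟨hxK, hxt⟩
      refine ⟨hxK, ?_⟩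
      have h1 : Real.log t ≤ -‖x‖^2 / (2 * σ^2) := (Real.log_le_iff_le_exp ht).2 hxt
      have h1' : Real.log t * (2 * σ^2) ≤ -‖x‖^2 := by
        rw [← le_div_iff₀ hσ2]; exact h1
      have h2 : ‖x‖^2 ≤ (σ * s)^2 := by
        rw [mul_pow, hs2]; nlinarith
      calc ‖x‖ = Real.sqrt (‖x‖^2) := (Real.sqrt_sq (norm_nonneg x)).symm
        _ ≤ Real.sqrt ((σ*s)^2) := Real.sqrt_le_sqrt h2
        _ = σ * s := Real.sqrt_sq (by positivity)
    · rintro ⟨hxK, hxr⟩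
      refine ⟨hxK, ?_⟩
      rw [← Real.log_le_iff_le_exp ht]
      have h2 : ‖x‖^2 ≤ (σ*s)^2 := pow_le_pow_left₀ (norm_nonneg x) hxr 2
      rw [mul_pow, hs2] at h2
      rw [le_div_iff₀ hσ2]
      nlinarith
  have hLK : L ⊆ K := by rw [hLeq]; exact inter_subset_left
  -- integrability
  have hIK : IntegrableOn f K := hfcont.continuousOn.integrableOn_compact hKcomp
  have hIL : IntegrableOn f L := hIK.mono_set hLK
  have hnonneg : ∀ (S : Set (EuclideanSpace ℝ (Fin n))),
      (0:EuclideanSpace ℝ (Fin n) → ℝ) ≤ᵐ[volume.restrict S] f :=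
    fun S => Filter.Eventually.of_forall (fun x => (hfpos x).le)
  set IK : ℝ := ∫ x in K, f x with hIKdef
  set IL : ℝ := ∫ x in L, f x with hILdef
  have hIKpos : 0 < IK := by
    rw [hIKdef]
    rw [setIntegral_pos_iff_support_of_nonneg_ae (hnonneg K) hIK]
    have hsupp : Function.support f = univ := by
      ext x; simp [Function.mem_support, (hfpos x).ne']
    rw [hsupp, univ_inter]
    calc (0:ENNReal) < volume (ball (0:EuclideanSpace ℝ (Fin n)) 1) :=
          measure_ball_pos _ _ one_pos
      _ ≤ volume K := measure_mono (ball_subset_closedBall.trans hKball)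
  have hILnonneg : 0 ≤ IL := integral_nonneg (fun x => (hfpos x).le)
  have hILK : IL ≤ IK :=
    setIntegral_mono_set hIK (hnonneg K) (Filter.Eventually.of_forall hLK)
  have hπ1 : IL / IK ≤ 1 := (div_le_one hIKpos).2 hILK
  have hπ0 : 0 ≤ IL / IK := div_nonneg hILnonneg hIKpos.le
  -- key bound: IL / IK ≤ s always
  have hπs : IL / IK ≤ s := by
    rcases le_or_gt 1 s with hs1 | hs1
    · exact hπ1.trans hs1
    rcases eq_or_lt_of_le hs0 with hs0' | hs0'
    · -- s = 0 : L has measure zero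
      have hIL0 : IL = 0 := by
        rw [hILdef]
        have hvol : volume L = 0 := by
          apply measure_mono_null (hLeq ▸ inter_subset_right)
          rw [← hs0', mul_zero]
          have hnt : Nontrivial (EuclideanSpace ℝ (Fin n)) := by
            have hne : Nonempty (Fin n) := ⟨⟨0, by omega⟩⟩
            infer_instance
          simp [closedBall_zero, measure_singleton]
        rw [Measure.restrict_eq_zero.2 hvol, integral_zero_measure]
      rw [hIL0, zero_div]
      exact le_of_eq hs0'
    · -- 0 < s < 1
      have hball : IntegrableOn f (closedBall 0 (σ*s)) :=
        hfcont.continuousOn.integrableOn_compact (isCompact_closedBall _ _)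
      have hballσ : IntegrableOn f (closedBall 0 σ) :=
        hfcont.continuousOn.integrableOn_compact (isCompact_closedBall _ _)
      have step1 : IL ≤ ∫ x in closedBall 0 (σ*s), f x := by
        apply setIntegral_mono_set hball (hnonneg _)
        exact Filter.Eventually.of_forall (fun x hx => (hLeq ▸ hx).2)
      have hsmul : s • closedBall (0:EuclideanSpace ℝ (Fin n)) σ = closedBall 0 (σ*s) := by
        rw [smul_closedBall _ _ hσ0.le, smul_zero, Real.norm_eq_abs, abs_of_pos hs0', mul_comm]
      have step2 : ∫ x in closedBall (0:EuclideanSpace ℝ (Fin n)) σ, f (s • x) =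
          (s ^ n)⁻¹ * ∫ x in closedBall 0 (σ*s), f x := by
        have h := MeasureTheory.Measure.setIntegral_comp_smul_of_pos volume f
          (closedBall (0:EuclideanSpace ℝ (Fin n)) σ) hs0'
        rw [hsmul] at h
        simpa [finrank_euclideanSpace_fin, smul_eq_mul] using h
      set c : ℝ := Real.exp ((1 - s^2)/2) with hcdef
      have hc0 : 0 < c := Real.exp_pos _
      have step3 : ∫ x in closedBall (0:EuclideanSpace ℝ (Fin n)) σ, f (s • x) ≤
          ∫ x in closedBall (0:EuclideanSpace ℝ (Fin n)) σ, c * f x := by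
        have hint1 : IntegrableOn (fun x => f (s • x)) (closedBall (0:EuclideanSpace ℝ (Fin n)) σ) :=
          (hfcont.comp (continuous_const_smul s)).continuousOn.integrableOn_compact
            (isCompact_closedBall _ _)
        apply setIntegral_mono_on hint1 (hballσ.const_mul c) measurableSet_closedBall
        intro x hx
        have hxσ : ‖x‖ ≤ σ := by simpa [dist_zero_right] using hx
        have hxσ2 : ‖x‖^2 ≤ σ^2 := pow_le_pow_left₀ (norm_nonneg x) hxσ 2
        have hnormsmul : ‖s • x‖^2 = s^2 * ‖x‖^2 := by
          rw [norm_smul, Real.norm_eq_abs, mul_pow, sq_abs]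
        show Real.exp (-‖s • x‖^2 / (2*σ^2)) ≤ c * Real.exp (-‖x‖^2/(2*σ^2))
        rw [hcdef, ← Real.exp_add]
        apply Real.exp_le_exp.2
        rw [hnormsmul]
        have key2 : -(s^2*‖x‖^2) ≤ (1-s^2)*σ^2 + -‖x‖^2 := by
          have h1 : (0:ℝ) ≤ 1 - s^2 := by
            have := pow_le_one₀ hs0 hs1.le (n := 2); linarith
          have h2 : (0:ℝ) ≤ σ^2 - ‖x‖^2 := sub_nonneg.2 hxσ2
          have h4 := mul_nonneg h1 h2
          have h3 : (1-s^2)*(σ^2-‖x‖^2) = (1-s^2)*σ^2 + -‖x‖^2 - -(s^2*‖x‖^2) := by ring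
          linarith
        calc -(s^2*‖x‖^2)/(2*σ^2) ≤ ((1-s^2)*σ^2 + -‖x‖^2)/(2*σ^2) :=
              div_le_div_of_nonneg_right key2 hσ2.le
          _ = (1-s^2)/2 + -‖x‖^2/(2*σ^2) := by field_simp
      have step4 : ∫ x in closedBall (0:EuclideanSpace ℝ (Fin n)) σ, c * f x =
          c * ∫ x in closedBall (0:EuclideanSpace ℝ (Fin n)) σ, f x :=
        integral_const_mul c f
      have step5 : ∫ x in closedBall (0:EuclideanSpace ℝ (Fin n)) σ, f x ≤ IK := by
        apply setIntegral_mono_set hIK (hnonneg K)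
        exact Filter.Eventually.of_forall
          (fun x hx => hKball ((closedBall_subset_closedBall hσ1) hx))
      -- sⁿ·c ≤ s
      have hsc : s^n * c ≤ s := by
        have h1 : s^n ≤ s^2 := pow_le_pow_of_le_one hs0 hs1.le hn
        have h2 : c ≤ s⁻¹ := by
          rw [hcdef, ← Real.exp_log (inv_pos.2 hs0'), Real.log_inv]
          apply Real.exp_le_exp.2
          have := Real.log_le_sub_one_of_pos hs0'
          nlinarith [sq_nonneg (s - 1)]
        calc s^n * c ≤ s^2 * s⁻¹ :=
              mul_le_mul h1 h2 hc0.le (by positivity)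
          _ = s := by field_simp [hs0'.ne']
      -- combine
      have hchain : IL ≤ s * IK := by
        have e1 : ∫ x in closedBall 0 (σ*s), f x =
            s^n * ∫ x in closedBall (0:EuclideanSpace ℝ (Fin n)) σ, f (s • x) := by
          rw [step2, ← mul_assoc, mul_inv_cancel₀ (by positivity : (s:ℝ)^n ≠ 0), one_mul]
        calc IL ≤ ∫ x in closedBall 0 (σ*s), f x := step1
          _ = s^n * ∫ x in closedBall (0:EuclideanSpace ℝ (Fin n)) σ, f (s • x) := e1
          _ ≤ s^n * (c * ∫ x in closedBall (0:EuclideanSpace ℝ (Fin n)) σ, f x) := by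
              apply mul_le_mul_of_nonneg_left _ (by positivity)
              rw [← step4]; exact step3
          _ = (s^n * c) * ∫ x in closedBall (0:EuclideanSpace ℝ (Fin n)) σ, f x := by ring
          _ ≤ (s^n * c) * IK := by
              apply mul_le_mul_of_nonneg_left step5 (by positivity)
          _ ≤ s * IK := mul_le_mul_of_nonneg_right hsc hIKpos.le
      rw [div_le_iff₀ hIKpos]
      exact hchain
  -- conclusion: the ball centered at 0 works
  refine ⟨0, fun x hx => ?_⟩
  have hx' : ‖x‖ ≤ σ * (IL / IK) := by simpa [dist_zero_right] using hx
  rw [hLeq]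
  constructor
  · apply hKball
    simp only [mem_closedBall, dist_zero_right]
    calc ‖x‖ ≤ σ * (IL / IK) := hx'
      _ ≤ σ * 1 := mul_le_mul_of_nonneg_left hπ1 hσ0.le
      _ ≤ 1 := by linarith
  · simp only [mem_closedBall, dist_zero_right]
    calc ‖x‖ ≤ σ * (IL / IK) := hx'
      _ ≤ σ * s := mul_le_mul_of_nonneg_left hπs hσ0.le
end

section
/- Let X and Y be real random variables on a common probability space with 0 ≤ X ≤ a and 0 ≤ Y ≤ b almost surely, for constants a, b > 0. Then |E(XY) − E(X)E(Y)| ≤ a·b·μ(X, Y), where μ(X,Y) = sup over measurable sets A, B ⊆ ℝ of |P(X ∈ A, Y ∈ B) − P(X ∈ A)P(Y ∈ B)|. -/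
open MeasureTheory Real Set
open scoped ENNReal

/-!
Hoeffding's covariance identity: for `0 ≤ x ≤ c` one has `x = ∫_{(0,c]} 1{s < x} ds`, so by
Fubini `Cov(X,Y) = ∫∫_{(0,a]×(0,b]} (P(X > s, Y > t) - P(X > s) P(Y > t)) ds dt`. Each value
of the integrand is one of the differences in the supremum `μ(X,Y)` (with `A = (s,∞)`,
`B = (t,∞)`), and the domain has area `a b`.
-/

section ProdSlices

variable {α β : Type*} [MeasurableSpace α] [MeasurableSpace β] {μ : Measure α} {ν : Measure β}

theorem integral_measureReal_prodMk_left_eq [IsFiniteMeasure μ] [IsFiniteMeasure ν]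
    {E : Set (α × β)} (hE : MeasurableSet E) :
    ∫ x, ν.real (Prod.mk x ⁻¹' E) ∂μ = ∫ y, μ.real ((fun x => (x, y)) ⁻¹' E) ∂ν := by
  simp only [Measure.real]
  rw [integral_toReal (measurable_measure_prodMk_left hE).aemeasurable
      (ae_of_all _ fun _ => measure_lt_top _ _),
    integral_toReal (measurable_measure_prodMk_right hE).aemeasurable
      (ae_of_all _ fun _ => measure_lt_top _ _),
    ← Measure.prod_apply hE, Measure.prod_apply_symm hE]

theorem integrableOn_measureReal_prodMk_right [IsFiniteMeasure μ] {s : Set β} (hs : ν s ≠ ∞)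
    {E : Set (α × β)} (hE : MeasurableSet E) :
    IntegrableOn (fun y => μ.real ((fun x => (x, y)) ⁻¹' E)) s ν :=
  Measure.integrableOn_of_bounded hs
    (measurable_measure_prodMk_right hE).ennreal_toReal.aestronglyMeasurable
    (ae_of_all _ fun _ => (Real.norm_of_nonneg measureReal_nonneg).trans_le
      (measureReal_mono (subset_univ _)))

end ProdSlices

theorem measureReal_restrict_Ioc_Iio {c x : ℝ} (hx₀ : 0 ≤ x) (hxc : x ≤ c) :
    (volume.restrict (Ioc 0 c)).real (Iio x) = x := by
  have hIoo : Iio x ∩ Ioc 0 c = Ioo 0 x := by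
    ext s
    exact ⟨fun ⟨hsx, hs₀, _⟩ => ⟨hs₀, hsx⟩, fun ⟨hs₀, hsx⟩ => ⟨hsx, hs₀, hsx.le.trans hxc⟩⟩
  rw [measureReal_restrict_apply measurableSet_Iio, hIoo, volume_real_Ioo_of_le hx₀, sub_zero]

theorem le_of_ae_mem_Icc {Ω : Type*} [MeasurableSpace Ω] {P : Measure Ω} [NeZero P]
    {Z : Ω → ℝ} {c d : ℝ} (hZ : ∀ᵐ ω ∂P, Z ω ∈ Icc c d) : c ≤ d :=
  let ⟨_, hω⟩ := hZ.exists
  hω.1.trans hω.2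

section LayerCake

variable {Ω : Type*} [MeasurableSpace Ω] {P : Measure Ω} [IsFiniteMeasure P]

theorem integral_eq_setIntegral_measureReal_lt {Z : Ω → ℝ} {c : ℝ} (hZ : Measurable Z)
    (hZc : ∀ᵐ ω ∂P, Z ω ∈ Icc 0 c) :
    ∫ ω, Z ω ∂P = ∫ s in Ioc 0 c, P.real {ω | s < Z ω} := by
  have hE : MeasurableSet {q : Ω × ℝ | q.2 < Z q.1} :=
    measurableSet_lt measurable_snd (hZ.comp measurable_fst)
  refine (integral_congr_ae ?_).trans (integral_measureReal_prodMk_left_eq hE)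
  filter_upwards [hZc] with ω hω
  exact (measureReal_restrict_Ioc_Iio hω.1 hω.2).symm

theorem integral_mul_eq_setIntegral_measureReal_lt {X Y : Ω → ℝ} {a b : ℝ}
    (hX : Measurable X) (hY : Measurable Y)
    (hXa : ∀ᵐ ω ∂P, X ω ∈ Icc 0 a) (hYb : ∀ᵐ ω ∂P, Y ω ∈ Icc 0 b) :
    ∫ ω, X ω * Y ω ∂P =
      ∫ p in Ioc 0 a ×ˢ Ioc 0 b, P.real ({ω | p.1 < X ω} ∩ {ω | p.2 < Y ω}) := by
  have hE : MeasurableSet {q : Ω × ℝ × ℝ | q.2.1 < X q.1 ∧ q.2.2 < Y q.1} :=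
    (measurableSet_lt (measurable_fst.comp measurable_snd) (hX.comp measurable_fst)).inter
      (measurableSet_lt (measurable_snd.comp measurable_snd) (hY.comp measurable_fst))
  rw [Measure.volume_eq_prod, ← Measure.prod_restrict]
  refine (integral_congr_ae ?_).trans (integral_measureReal_prodMk_left_eq hE)
  filter_upwards [hXa, hYb] with ω hXω hYω
  change X ω * Y ω = ((volume.restrict (Ioc 0 a)).prod (volume.restrict (Ioc 0 b))).real
    (Iio (X ω) ×ˢ Iio (Y ω))
  rw [measureReal_prod_prod, measureReal_restrict_Ioc_Iio hXω.1 hXω.2,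
    measureReal_restrict_Ioc_Iio hYω.1 hYω.2]

theorem integral_mul_sub_mul_integral_eq_setIntegral {X Y : Ω → ℝ} {a b : ℝ}
    (hX : Measurable X) (hY : Measurable Y)
    (hXa : ∀ᵐ ω ∂P, X ω ∈ Icc 0 a) (hYb : ∀ᵐ ω ∂P, Y ω ∈ Icc 0 b) :
    (∫ ω, X ω * Y ω ∂P) - (∫ ω, X ω ∂P) * (∫ ω, Y ω ∂P) =
      ∫ p in Ioc 0 a ×ˢ Ioc 0 b, (P.real ({ω | p.1 < X ω} ∩ {ω | p.2 < Y ω}) -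
        P.real {ω | p.1 < X ω} * P.real {ω | p.2 < Y ω}) := by
  have hXgt : IntegrableOn (fun s => P.real {ω | s < X ω}) (Ioc 0 a) :=
    integrableOn_measureReal_prodMk_right measure_Ioc_lt_top.ne
      (measurableSet_lt measurable_snd (hX.comp measurable_fst))
  have hYgt : IntegrableOn (fun t => P.real {ω | t < Y ω}) (Ioc 0 b) :=
    integrableOn_measureReal_prodMk_right measure_Ioc_lt_top.ne
      (measurableSet_lt measurable_snd (hY.comp measurable_fst))
  have hXYgt : IntegrableOn (fun p : ℝ × ℝ => P.real ({ω | p.1 < X ω} ∩ {ω | p.2 < Y ω}))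
      (Ioc 0 a ×ˢ Ioc 0 b) :=
    integrableOn_measureReal_prodMk_right
      ((Metric.isBounded_Ioc 0 a).prod (Metric.isBounded_Ioc 0 b)).measure_lt_top.ne
      ((measurableSet_lt (measurable_fst.comp measurable_snd) (hX.comp measurable_fst)).inter
        (measurableSet_lt (measurable_snd.comp measurable_snd) (hY.comp measurable_fst)))
  rw [integral_mul_eq_setIntegral_measureReal_lt hX hY hXa hYb,
    integral_eq_setIntegral_measureReal_lt hX hXa, integral_eq_setIntegral_measureReal_lt hY hYb,
    Measure.volume_eq_prod, ← setIntegral_prod_mul, integral_sub]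
  · rwa [← Measure.volume_eq_prod]
  · rw [← Measure.prod_restrict]
    exact hXgt.mul_prod hYgt

end LayerCake

section Dependence

variable {Ω α β : Type*} [MeasurableSpace Ω] [MeasurableSpace α] [MeasurableSpace β]

noncomputable def dependence (P : Measure Ω) (X : Ω → α) (Y : Ω → β) : ℝ :=
  sSup {r : ℝ | ∃ A B, MeasurableSet A ∧ MeasurableSet B ∧
    r = |P.real (X ⁻¹' A ∩ Y ⁻¹' B) - P.real (X ⁻¹' A) * P.real (Y ⁻¹' B)|}

theorem abs_measureReal_inter_sub_mul_le_one (P : Measure Ω) [IsProbabilityMeasure P]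
    (s t : Set Ω) : |P.real (s ∩ t) - P.real s * P.real t| ≤ 1 :=
  abs_sub_le_of_nonneg_of_le measureReal_nonneg measureReal_le_one
    (mul_nonneg measureReal_nonneg measureReal_nonneg)
    (mul_le_one₀ measureReal_le_one measureReal_nonneg measureReal_le_one)

theorem abs_measureReal_inter_sub_mul_le_dependence {P : Measure Ω} [IsProbabilityMeasure P]
    {X : Ω → α} {Y : Ω → β} {A : Set α} {B : Set β} (hA : MeasurableSet A)
    (hB : MeasurableSet B) :
    |P.real (X ⁻¹' A ∩ Y ⁻¹' B) - P.real (X ⁻¹' A) * P.real (Y ⁻¹' B)| ≤ dependence P X Y := by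
  refine le_csSup ⟨1, ?_⟩ ⟨A, B, hA, hB, rfl⟩
  rintro r ⟨A, B, -, -, rfl⟩
  exact abs_measureReal_inter_sub_mul_le_one P _ _

end Dependence

theorem covariance_dependence_bound_general
    {Ω : Type*} [MeasurableSpace Ω]
    (P : Measure Ω) [IsProbabilityMeasure P]
    (X Y : Ω → ℝ) (hX : Measurable X) (hY : Measurable Y)
    (a b : ℝ)
    (hXab : ∀ᵐ ω ∂P, X ω ∈ Icc 0 a) (hYab : ∀ᵐ ω ∂P, Y ω ∈ Icc 0 b) :
    |(∫ ω, X ω * Y ω ∂P) - (∫ ω, X ω ∂P) * (∫ ω, Y ω ∂P)| ≤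
      a * b * sSup {r : ℝ | ∃ A B : Set ℝ, MeasurableSet A ∧ MeasurableSet B ∧
        r = |(P (X ⁻¹' A ∩ Y ⁻¹' B)).toReal -
          (P (X ⁻¹' A)).toReal * (P (Y ⁻¹' B)).toReal|} := by
  rw [integral_mul_sub_mul_integral_eq_setIntegral hX hY hXab hYab, ← Real.norm_eq_abs]
  calc _ ≤ dependence P X Y * volume.real (Ioc 0 a ×ˢ Ioc 0 b) := by
        refine norm_setIntegral_le_of_norm_le_const ?_ fun _ _ => ?_
        · exact ((Metric.isBounded_Ioc 0 a).prod (Metric.isBounded_Ioc 0 b)).measure_lt_top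
        · exact abs_measureReal_inter_sub_mul_le_dependence measurableSet_Ioi measurableSet_Ioi
    _ = a * b * dependence P X Y := by
        rw [Measure.volume_eq_prod, measureReal_prod_prod,
          volume_real_Ioc_of_le (le_of_ae_mem_Icc hXab),
          volume_real_Ioc_of_le (le_of_ae_mem_Icc hYab)]
        ring

/-- Covariance bound via the dependence measure `μ` (Lemma 6.5 of the paper): for real
random variables `X, Y` with `0 ≤ X ≤ a` and `0 ≤ Y ≤ b` almost surely,
`|E(XY) − E(X)E(Y)| ≤ a·b·μ(X,Y)`, where
`μ(X,Y) = sup_{A,B} |P(X ∈ A, Y ∈ B) − P(X ∈ A)P(Y ∈ B)|`. -/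
theorem covariance_dependence_bound
    {Ω : Type*} [MeasurableSpace Ω]
    (P : Measure Ω) [IsProbabilityMeasure P]
    (X Y : Ω → ℝ) (hX : Measurable X) (hY : Measurable Y)
    (a b : ℝ) (ha : 0 < a) (hb : 0 < b)
    (hXab : ∀ᵐ ω ∂P, X ω ∈ Icc 0 a) (hYab : ∀ᵐ ω ∂P, Y ω ∈ Icc 0 b) :
    |(∫ ω, X ω * Y ω ∂P) - (∫ ω, X ω ∂P) * (∫ ω, Y ω ∂P)| ≤
      a * b * sSup {r : ℝ | ∃ A B : Set ℝ, MeasurableSet A ∧ MeasurableSet B ∧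
        r = |(P (X ⁻¹' A ∩ Y ⁻¹' B)).toReal -
          (P (X ⁻¹' A)).toReal * (P (Y ⁻¹' B)).toReal|} :=
  covariance_dependence_bound_general P X Y hX hY a b hXab hYab
end

section
/- Let n ≥ 1 be an integer, let 0 < a' < a, and let r' > 0. Then (∫₀^{r'} r^{n−1} e^{−a' r²} dr) · (∫₀^{∞} r^{n−1} e^{−a r²} dr) ≤ (∫₀^{r'} r^{n−1} e^{−a r²} dr) · (∫₀^{∞} r^{n−1} e^{−a' r²} dr); equivalently, the ratio of the truncated integrals ∫₀^{r'} r^{n−1} e^{−a' r²} dr / ∫₀^{r'} r^{n−1} e^{−a r²} dr is at most the ratio of the full integrals ∫₀^{∞} r^{n−1} e^{−a' r²} dr / ∫₀^{∞} r^{n−1} e^{−a r²} dr. -/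
open MeasureTheory Real Set

/-
Write `e^{-a' r²} = w(r) e^{-a r²}` with `w(r) = e^{(a - a') r²}` nondecreasing on `(0, ∞)`.
Against the nonnegative density `f(r) = r^{n-1} e^{-a r²}`, the weight `w` is at most `w(r')` on
`(0, r']` and at least `w(r')` on `(r', ∞)`. Hence the `w f`-mass of `(0, r']` is at most `w(r')`
times its `f`-mass, while the reverse holds on `(r', ∞)`; splitting the full integrals at `r'`
and comparing the cross terms gives the inequality.
-/

section Chebyshev

variable {α : Type*} [MeasurableSpace α] [TopologicalSpace α] [LinearOrder α]
  [OrderClosedTopology α] [OpensMeasurableSpace α] {μ : Measure α}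

theorem setIntegral_Ioc_mul_setIntegral_Ioi_le_of_monotoneOn {f w : α → ℝ} {c r : α}
    (hcr : c < r) (hf : IntegrableOn f (Ioi c) μ)
    (hwf : IntegrableOn (fun x ↦ w x * f x) (Ioi c) μ)
    (hf_nonneg : ∀ x ∈ Ioi c, 0 ≤ f x) (hw : MonotoneOn w (Ioi c)) :
    (∫ x in Ioc c r, w x * f x ∂μ) * (∫ x in Ioi c, f x ∂μ) ≤
      (∫ x in Ioc c r, f x ∂μ) * (∫ x in Ioi c, w x * f x ∂μ) := by
  have hlow : Ioc c r ⊆ Ioi c := Ioc_subset_Ioi_self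
  have hhigh : Ioi r ⊆ Ioi c := Ioi_subset_Ioi hcr.le
  have hsplit : ∀ g : α → ℝ, IntegrableOn g (Ioi c) μ →
      ∫ x in Ioi c, g x ∂μ = (∫ x in Ioc c r, g x ∂μ) + ∫ x in Ioi r, g x ∂μ := by
    intro g hg
    rw [← Ioc_union_Ioi_eq_Ioi hcr.le,
      setIntegral_union (Ioc_disjoint_Ioi le_rfl) measurableSet_Ioi (hg.mono_set hlow)
        (hg.mono_set hhigh)]
  have hlow_le : ∫ x in Ioc c r, w x * f x ∂μ ≤ w r * ∫ x in Ioc c r, f x ∂μ := by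
    rw [← integral_const_mul]
    refine setIntegral_mono_on (hwf.mono_set hlow) ((hf.mono_set hlow).const_mul _)
      measurableSet_Ioc fun x hx ↦ mul_le_mul_of_nonneg_right ?_ (hf_nonneg x (hlow hx))
    exact hw (hlow hx) hcr hx.2
  have hhigh_le : w r * ∫ x in Ioi r, f x ∂μ ≤ ∫ x in Ioi r, w x * f x ∂μ := by
    rw [← integral_const_mul]
    refine setIntegral_mono_on ((hf.mono_set hhigh).const_mul _) (hwf.mono_set hhigh)
      measurableSet_Ioi fun x hx ↦ mul_le_mul_of_nonneg_right ?_ (hf_nonneg x (hhigh hx))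
    exact hw hcr (hhigh hx) hx.le
  have hA : 0 ≤ ∫ x in Ioc c r, f x ∂μ :=
    setIntegral_nonneg measurableSet_Ioc fun x hx ↦ hf_nonneg x (hlow hx)
  have hT : 0 ≤ ∫ x in Ioi r, f x ∂μ :=
    setIntegral_nonneg measurableSet_Ioi fun x hx ↦ hf_nonneg x (hhigh hx)
  rw [hsplit f hf, hsplit _ hwf]
  nlinarith [mul_le_mul_of_nonneg_right hlow_le hT, mul_le_mul_of_nonneg_left hhigh_le hA]

end Chebyshev

theorem integrableOn_pow_mul_exp_neg_mul_sq {b : ℝ} (hb : 0 < b) (m : ℕ) :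
    IntegrableOn (fun x : ℝ ↦ x ^ m * exp (-b * x ^ 2)) (Ioi 0) :=
  (integrableOn_rpow_mul_exp_neg_mul_sq hb (s := m)
    (by linarith [m.cast_nonneg (α := ℝ)])).congr_fun
      (fun x _ ↦ by simp only [rpow_natCast]) measurableSet_Ioi

theorem monotoneOn_exp_mul_sq {c : ℝ} (hc : 0 ≤ c) :
    MonotoneOn (fun x : ℝ ↦ exp (c * x ^ 2)) (Ioi 0) := fun _ hx _ _ hxy ↦
  exp_le_exp.mpr (mul_le_mul_of_nonneg_left (pow_le_pow_left₀ hx.le hxy 2) hc)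

theorem truncated_radial_gaussian_ratio_general
    (n : ℕ) (a a' r' : ℝ)
    (ha' : 0 < a') (haa : a' < a) (hr : 0 < r') :
    (∫ r in Ioc (0:ℝ) r', r ^ (n - 1) * Real.exp (-a' * r ^ 2)) *
        (∫ r in Ioi (0:ℝ), r ^ (n - 1) * Real.exp (-a * r ^ 2)) ≤
      (∫ r in Ioc (0:ℝ) r', r ^ (n - 1) * Real.exp (-a * r ^ 2)) *
        (∫ r in Ioi (0:ℝ), r ^ (n - 1) * Real.exp (-a' * r ^ 2)) := by
  have hweight : ∀ r : ℝ, r ^ (n - 1) * exp (-a' * r ^ 2) =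
      exp ((a - a') * r ^ 2) * (r ^ (n - 1) * exp (-a * r ^ 2)) := fun r ↦ by
    rw [mul_left_comm, ← exp_add]
    ring_nf
  simp only [hweight]
  have hf := integrableOn_pow_mul_exp_neg_mul_sq (ha'.trans haa) (n - 1)
  refine setIntegral_Ioc_mul_setIntegral_Ioi_le_of_monotoneOn hr hf ?_
    (fun x hx ↦ by have : 0 < x := hx; positivity) (monotoneOn_exp_mul_sq (sub_nonneg.mpr haa.le))
  simpa only [hweight] using integrableOn_pow_mul_exp_neg_mul_sq ha' (n - 1)

/-- Monotonicity of truncated radial Gaussian integrals: for `n ≥ 1`, `0 < a' < a` and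
`r' > 0`, the ratio of the truncated integrals `∫₀^{r'} r^{n-1} e^{-a'r²} dr /
∫₀^{r'} r^{n-1} e^{-ar²} dr` is at most the ratio of the full integrals, stated in
product form. -/
theorem truncated_radial_gaussian_ratio
    (n : ℕ) (hn : 1 ≤ n) (a a' r' : ℝ)
    (ha' : 0 < a') (haa : a' < a) (hr : 0 < r') :
    (∫ r in Ioc (0:ℝ) r', r ^ (n - 1) * Real.exp (-a' * r ^ 2)) *
        (∫ r in Ioi (0:ℝ), r ^ (n - 1) * Real.exp (-a * r ^ 2)) ≤
      (∫ r in Ioc (0:ℝ) r', r ^ (n - 1) * Real.exp (-a * r ^ 2)) *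
        (∫ r in Ioi (0:ℝ), r ^ (n - 1) * Real.exp (-a' * r ^ 2)) :=
  truncated_radial_gaussian_ratio_general n a a' r' ha' haa hr
end
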